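/- arXiv:1401.6053 — 2 statements merged into one kernel-verified Lean document; each statement's English description precedes it below -/
import Mathlib

section
/- Weak duality for the continuous-time minimum cost flow problem in the zero-transit-time, single-arc setting: if x : [0,T] → ℝ is a feasible primal flow and (π_s, π_t, ρ) a feasible dual solution, then the primal objective value is at least the dual objective value. Concretely, let G have nodes s,t and one arc e = (s,t) with zero transit time; if 0 ≤ x(θ) ≤ u(θ) and the induced storages Y_s(θ) = B_s(θ) − ∫₀^θ x, Y_t(θ) = B_t(θ) + ∫₀^θ x satisfy 0 ≤ Y_v ≤ U_v for v ∈ {s,t}, and if π_s, π_t : [0,T] → ℝ are right-continuous of bounded variation with π_v(T) = 0, ρ(θ) ≤ 0, and π_s(θ) − π_t(θ) + ρ(θ) ≤ c(θ) for all θ, then ∫₀^T c(θ)x(θ)dθ ≥ ∫₀^T (b_s π_s + b_t π_t) dθ − Σ_{v∈{s,t}} ∫₀^T U_v dπ_v⁻ + ∫₀^T u(θ)ρ(θ) dθ. -/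
/-!
Dual feasibility, `ρ ≤ 0` and `0 ≤ x ≤ u` give pointwise `(π_s - π_t) x ≤ c x - u ρ`, so it
suffices to bound `∫ π_v g_v` at each node, where `g_v` is the flow leaving `v`. Write
`π = p - q` with `π T = 0`. Fubini on the triangle `{t < θ}` turns the Stieltjes integral of a
primitive into `∫ f (p T - p ·)`, whence `∫ π f = ∫ F dq - ∫ F dp` for `F = ∫₀^· f`. Taking
`f = g_v - b_v` makes `F = -Y_v` the negated storage, and `0 ≤ Y_v ≤ U_v` yields
`∫ π_v g_v ≥ ∫ b_v π_v - ∫ U_v dq`.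
-/

open MeasureTheory Set

theorem StieltjesFunction.setIntegral_Ioc_primitive (p : StieltjesFunction ℝ) {f : ℝ → ℝ}
    {a b : ℝ} (hf : IntegrableOn f (Ioc a b)) :
    ∫ θ in Ioc a b, (∫ t in a..θ, f t) ∂p.measure = ∫ t in Ioc a b, f t * (p b - p t) := by
  set μ := p.measure.restrict (Ioc a b)
  set ν := volume.restrict (Ioc a b)
  have : IsFiniteMeasure μ := ⟨by simp [μ, p.measure_Ioc]⟩
  set G : ℝ × ℝ → ℝ := {z | z.2 < z.1}.indicator fun z => f z.2
  have hG : Integrable G (μ.prod ν) :=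
    (hf.comp_snd μ).indicator (measurableSet_lt measurable_snd measurable_fst)
  have hslice_volume : ∀ θ ∈ Ioc a b, ∫ t, G (θ, t) ∂ν = ∫ t in a..θ, f t := by
    intro θ hθ
    have hset : Iio θ ∩ Ioc a b = Ioo a θ := by ext t; grind
    have : (fun t => G (θ, t)) = (Iio θ).indicator f := by
      ext t; simp [G, indicator]
    rw [this, integral_indicator measurableSet_Iio, Measure.restrict_restrict measurableSet_Iio,
      hset, ← integral_Ioc_eq_integral_Ioo, intervalIntegral.integral_of_le hθ.1.le]
  have hslice_stieltjes : ∀ t ∈ Ioc a b, ∫ θ, G (θ, t) ∂μ = f t * (p b - p t) := by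
    intro t ht
    have hset : Ioi t ∩ Ioc a b = Ioc t b := by ext θ; grind
    have : (fun θ => G (θ, t)) = (Ioi t).indicator fun _ => f t := by
      ext θ; simp [G, indicator]
    rw [this, integral_indicator _root_.measurableSet_Ioi, setIntegral_const,
      measureReal_restrict_apply _root_.measurableSet_Ioi, hset, measureReal_def, p.measure_Ioc,
      ENNReal.toReal_ofReal (sub_nonneg.2 (p.mono ht.2)), smul_eq_mul, mul_comm]
  calc ∫ θ in Ioc a b, (∫ t in a..θ, f t) ∂p.measure
      = ∫ θ, ∫ t, G (θ, t) ∂ν ∂μ :=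
        (setIntegral_congr_fun measurableSet_Ioc hslice_volume).symm
    _ = ∫ t, ∫ θ, G (θ, t) ∂μ ∂ν := integral_integral_swap hG
    _ = ∫ t in Ioc a b, f t * (p b - p t) :=
        setIntegral_congr_fun measurableSet_Ioc hslice_stieltjes

theorem Monotone.integrableOn_mul {g f : ℝ → ℝ} (hg : Monotone g) {a b : ℝ}
    (hf : IntegrableOn f (Ioc a b)) : IntegrableOn (fun t => g t * f t) (Ioc a b) := by
  refine hf.bdd_mul (c := |g a| + |g b|) hg.measurable.aestronglyMeasurable ?_
  refine (ae_restrict_iff' measurableSet_Ioc).2 (.of_forall fun t ht => ?_)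
  rw [Real.norm_eq_abs, abs_le]
  constructor <;> linarith [hg ht.1.le, hg ht.2, neg_abs_le (g a), le_abs_self (g b),
    abs_nonneg (g a), abs_nonneg (g b)]

section Pairing

variable {p q : StieltjesFunction ℝ} {π f : ℝ → ℝ} {a b : ℝ}

theorem integrableOn_mul_of_eq_sub (hπ : ∀ θ, π θ = p θ - q θ)
    (hf : IntegrableOn f (Ioc a b)) : IntegrableOn (fun t => π t * f t) (Ioc a b) := by
  simp only [hπ, sub_mul]
  exact (p.mono.integrableOn_mul hf).sub (q.mono.integrableOn_mul hf)

theorem setIntegral_mul_eq_sub_setIntegral_primitive (hπ : ∀ θ, π θ = p θ - q θ)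
    (hπb : π b = 0) (hf : IntegrableOn f (Ioc a b)) :
    ∫ t in Ioc a b, π t * f t =
      (∫ θ in Ioc a b, (∫ t in a..θ, f t) ∂q.measure)
        - ∫ θ in Ioc a b, (∫ t in a..θ, f t) ∂p.measure := by
  have hpq : p b = q b := by linarith [hπ b]
  have hint (r : StieltjesFunction ℝ) : IntegrableOn (fun t => f t * (r b - r t)) (Ioc a b) :=
    IntegrableOn.congr_fun ((hf.const_mul (r b)).sub (r.mono.integrableOn_mul hf))
      (fun t _ => by simp only [Pi.sub_apply]; ring) measurableSet_Ioc
  rw [q.setIntegral_Ioc_primitive hf, p.setIntegral_Ioc_primitive hf,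
    ← integral_sub (hint q) (hint p)]
  exact setIntegral_congr_fun measurableSet_Ioc fun t _ => by rw [hπ, hpq]; ring

end Pairing

theorem setIntegral_mul_sub_le_of_storage {p q : StieltjesFunction ℝ} {π d g Y U : ℝ → ℝ}
    {a b : ℝ} (hab : a ≤ b) (hπ : ∀ θ, π θ = p θ - q θ) (hπb : π b = 0)
    (hd : IntegrableOn d (Ioc a b)) (hg : IntegrableOn g (Ioc a b))
    (hY : ∀ θ ∈ Ioc a b, Y θ = (∫ t in a..θ, d t) - ∫ t in a..θ, g t)
    (hYU : ∀ θ ∈ Ioc a b, 0 ≤ Y θ ∧ Y θ ≤ U θ) (hU : IntegrableOn U (Ioc a b) q.measure) :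
    (∫ t in Ioc a b, d t * π t) - ∫ θ in Ioc a b, U θ ∂q.measure ≤ ∫ t in Ioc a b, π t * g t := by
  have hprim : ∀ θ ∈ Ioc a b, ∫ t in a..θ, (g t - d t) = -Y θ := by
    intro θ hθ
    have hsub : Ioc a θ ⊆ Ioc a b := Ioc_subset_Ioc_right hθ.2
    rw [hY θ hθ, intervalIntegral.integral_sub
      ((intervalIntegrable_iff_integrableOn_Ioc_of_le hθ.1.le).2 (hg.mono_set hsub))
      ((intervalIntegrable_iff_integrableOn_Ioc_of_le hθ.1.le).2 (hd.mono_set hsub))]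
    ring
  have hprim_cont : ContinuousOn (fun θ => ∫ t in a..θ, (g t - d t)) (Icc a b) := by
    simpa [uIcc_of_le hab] using intervalIntegral.continuousOn_primitive_interval'
      ((intervalIntegrable_iff_integrableOn_Ioc_of_le hab).2 (hg.sub hd)) left_mem_uIcc
  have hYint : IntegrableOn Y (Ioc a b) q.measure :=
    (hprim_cont.integrableOn_Icc.mono_set Ioc_subset_Icc_self).neg.congr_fun
      (fun θ hθ => by simp [hprim θ hθ]) measurableSet_Ioc
  have hpairing : ∫ t in Ioc a b, π t * (g t - d t) =
      (∫ θ in Ioc a b, Y θ ∂p.measure) - ∫ θ in Ioc a b, Y θ ∂q.measure := by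
    rw [setIntegral_mul_eq_sub_setIntegral_primitive (f := fun t => g t - d t) hπ hπb (hg.sub hd),
      setIntegral_congr_fun measurableSet_Ioc hprim, setIntegral_congr_fun measurableSet_Ioc hprim,
      integral_neg, integral_neg]
    ring
  have hsplit : ∫ t in Ioc a b, π t * (g t - d t) =
      (∫ t in Ioc a b, π t * g t) - ∫ t in Ioc a b, d t * π t := by
    simp only [mul_sub, mul_comm (π _) (d _)]
    exact integral_sub (integrableOn_mul_of_eq_sub hπ hg)
      ((integrableOn_mul_of_eq_sub hπ hd).congr_fun (fun t _ => mul_comm _ _) measurableSet_Ioc)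
  have hYp : 0 ≤ ∫ θ in Ioc a b, Y θ ∂p.measure :=
    setIntegral_nonneg measurableSet_Ioc fun θ hθ => (hYU θ hθ).1
  have hYq : ∫ θ in Ioc a b, Y θ ∂q.measure ≤ ∫ θ in Ioc a b, U θ ∂q.measure :=
    setIntegral_mono_on hYint hU measurableSet_Ioc fun θ hθ => (hYU θ hθ).2
  linarith

theorem mul_le_sub_of_dual_feasible {πs πt ρ c x u : ℝ} (hx : 0 ≤ x) (hxu : x ≤ u) (hρ : ρ ≤ 0)
    (hdual : πs - πt + ρ ≤ c) : (πs - πt) * x ≤ c * x - u * ρ := by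
  nlinarith [mul_le_mul_of_nonneg_right hdual hx, mul_le_mul_of_nonpos_left hxu hρ]

theorem weak_duality_single_arc_general
    (T : ℝ) (hT : 0 < T)
    (bs bt c u Us Ut : ℝ → ℝ)
    -- primal feasibility
    (x : ℝ → ℝ) (hxint : IntervalIntegrable x volume 0 T)
    (hbsint : IntervalIntegrable bs volume 0 T) (hbtint : IntervalIntegrable bt volume 0 T)
    (hxu : ∀ θ ∈ Set.Icc 0 T, 0 ≤ x θ ∧ x θ ≤ u θ)
    (Ys Yt : ℝ → ℝ)
    (hYs : ∀ θ, Ys θ = (∫ t in (0:ℝ)..θ, bs t) - ∫ t in (0:ℝ)..θ, x t)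
    (hYt : ∀ θ, Yt θ = (∫ t in (0:ℝ)..θ, bt t) + ∫ t in (0:ℝ)..θ, x t)
    (hYsfeas : ∀ θ ∈ Set.Icc 0 T, 0 ≤ Ys θ ∧ Ys θ ≤ Us θ)
    (hYtfeas : ∀ θ ∈ Set.Icc 0 T, 0 ≤ Yt θ ∧ Yt θ ≤ Ut θ)
    -- dual feasibility
    (ps qs pt qt : StieltjesFunction ℝ) (πs πt : ℝ → ℝ)
    (hπs : ∀ θ, πs θ = ps θ - qs θ) (hπt : ∀ θ, πt θ = pt θ - qt θ)
    (hπsT : πs T = 0) (hπtT : πt T = 0)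
    (ρ : ℝ → ℝ) (hρ : ∀ θ ∈ Set.Icc 0 T, ρ θ ≤ 0)
    (hdualfeas : ∀ θ ∈ Set.Icc 0 T, πs θ - πt θ + ρ θ ≤ c θ)
    -- integrability of the objective integrands
    (hint1 : IntervalIntegrable (fun θ => c θ * x θ) volume 0 T)
    (hint3 : IntervalIntegrable (fun θ => u θ * ρ θ) volume 0 T)
    (hint4 : IntegrableOn Us (Set.Ioc 0 T) qs.measure)
    (hint5 : IntegrableOn Ut (Set.Ioc 0 T) qt.measure) :
    (∫ θ in (0:ℝ)..T, c θ * x θ) ≥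
      (∫ θ in (0:ℝ)..T, (bs θ * πs θ + bt θ * πt θ))
        - ((∫ θ in Set.Ioc (0:ℝ) T, Us θ ∂qs.measure)
            + (∫ θ in Set.Ioc (0:ℝ) T, Ut θ ∂qt.measure))
        + (∫ θ in (0:ℝ)..T, u θ * ρ θ) := by
  simp only [ge_iff_le, intervalIntegral.integral_of_le hT.le]
  have hIcc : Ioc 0 T ⊆ Icc 0 T := Ioc_subset_Icc_self
  have hx : IntegrableOn x (Ioc 0 T) := hxint.1
  have hxneg : IntegrableOn (fun t => -x t) (Ioc 0 T) := hx.neg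
  have hsource := setIntegral_mul_sub_le_of_storage hT.le hπs hπsT hbsint.1 hx
    (fun θ _ => hYs θ) (fun θ hθ => hYsfeas θ (hIcc hθ)) hint4
  have hsink := setIntegral_mul_sub_le_of_storage hT.le hπt hπtT hbtint.1
    hxneg (fun θ _ => by rw [hYt, intervalIntegral.integral_neg, sub_neg_eq_add])
    (fun θ hθ => hYtfeas θ (hIcc hθ)) hint5
  have harc : (∫ t in Ioc 0 T, πs t * x t) + ∫ t in Ioc 0 T, πt t * -x t ≤
      (∫ t in Ioc 0 T, c t * x t) - ∫ t in Ioc 0 T, u t * ρ t := by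
    rw [← integral_add (integrableOn_mul_of_eq_sub hπs hx) (integrableOn_mul_of_eq_sub hπt hxneg),
      ← integral_sub hint1.1 hint3.1]
    refine setIntegral_mono_on ((integrableOn_mul_of_eq_sub hπs hx).add
      (integrableOn_mul_of_eq_sub hπt hxneg)) (hint1.1.sub hint3.1) measurableSet_Ioc
      fun θ hθ => ?_
    obtain ⟨hx0, hxu⟩ := hxu θ (hIcc hθ)
    have := mul_le_sub_of_dual_feasible hx0 hxu (hρ θ (hIcc hθ)) (hdualfeas θ (hIcc hθ))
    linarith
  have hsupply : ∫ t in Ioc 0 T, (bs t * πs t + bt t * πt t) =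
      (∫ t in Ioc 0 T, bs t * πs t) + ∫ t in Ioc 0 T, bt t * πt t := by
    refine integral_add ?_ ?_ <;> simp only [mul_comm (bs _), mul_comm (bt _)]
    exacts [integrableOn_mul_of_eq_sub hπs hbsint.1, integrableOn_mul_of_eq_sub hπt hbtint.1]
  linarith

/-- Weak duality for the continuous-time minimum cost flow problem in the
zero-transit-time, single-arc setting (nodes `s`, `t`, one arc `e = (s,t)`): the
primal objective value of any feasible flow is at least the dual objective value of
any feasible dual solution. The dual functions `π_s, π_t` are right-continuous of
bounded variation, represented via decompositions `π_v = p_v - q_v` into differences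
of (right-continuous, monotone) Stieltjes functions; `∫₀ᵀ U_v dπ_v⁻` is the
Lebesgue–Stieltjes integral of `U_v` against the negative part `q_v`. -/
theorem weak_duality_single_arc
    (T : ℝ) (hT : 0 < T)
    (bs bt c u Us Ut : ℝ → ℝ)
    (hu : ∀ θ ∈ Set.Icc 0 T, 0 ≤ u θ)
    (hUs : ∀ θ ∈ Set.Icc 0 T, 0 ≤ Us θ) (hUt : ∀ θ ∈ Set.Icc 0 T, 0 ≤ Ut θ)
    -- primal feasibility
    (x : ℝ → ℝ) (hxint : IntervalIntegrable x volume 0 T)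
    (hbsint : IntervalIntegrable bs volume 0 T) (hbtint : IntervalIntegrable bt volume 0 T)
    (hxu : ∀ θ ∈ Set.Icc 0 T, 0 ≤ x θ ∧ x θ ≤ u θ)
    (Ys Yt : ℝ → ℝ)
    (hYs : ∀ θ, Ys θ = (∫ t in (0:ℝ)..θ, bs t) - ∫ t in (0:ℝ)..θ, x t)
    (hYt : ∀ θ, Yt θ = (∫ t in (0:ℝ)..θ, bt t) + ∫ t in (0:ℝ)..θ, x t)
    (hYsfeas : ∀ θ ∈ Set.Icc 0 T, 0 ≤ Ys θ ∧ Ys θ ≤ Us θ)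
    (hYtfeas : ∀ θ ∈ Set.Icc 0 T, 0 ≤ Yt θ ∧ Yt θ ≤ Ut θ)
    -- dual feasibility
    (ps qs pt qt : StieltjesFunction ℝ) (πs πt : ℝ → ℝ)
    (hπs : ∀ θ, πs θ = ps θ - qs θ) (hπt : ∀ θ, πt θ = pt θ - qt θ)
    (hπsT : πs T = 0) (hπtT : πt T = 0)
    (ρ : ℝ → ℝ) (hρ : ∀ θ ∈ Set.Icc 0 T, ρ θ ≤ 0)
    (hdualfeas : ∀ θ ∈ Set.Icc 0 T, πs θ - πt θ + ρ θ ≤ c θ)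
    -- integrability of the objective integrands
    (hint1 : IntervalIntegrable (fun θ => c θ * x θ) volume 0 T)
    (hint2 : IntervalIntegrable (fun θ => bs θ * πs θ + bt θ * πt θ) volume 0 T)
    (hint3 : IntervalIntegrable (fun θ => u θ * ρ θ) volume 0 T)
    (hint4 : IntegrableOn Us (Set.Ioc 0 T) qs.measure)
    (hint5 : IntegrableOn Ut (Set.Ioc 0 T) qt.measure) :
    (∫ θ in (0:ℝ)..T, c θ * x θ) ≥
      (∫ θ in (0:ℝ)..T, (bs θ * πs θ + bt θ * πt θ))
        - ((∫ θ in Set.Ioc (0:ℝ) T, Us θ ∂qs.measure)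
            + (∫ θ in Set.Ioc (0:ℝ) T, Ut θ ∂qt.measure))
        + (∫ θ in (0:ℝ)..T, u θ * ρ θ) :=
  weak_duality_single_arc_general T hT bs bt c u Us Ut x hxint hbsint hbtint hxu Ys Yt hYs hYt
    hYsfeas hYtfeas ps qs pt qt πs πt hπs hπt hπsT hπtT ρ hρ hdualfeas hint1 hint3 hint4 hint5
end

section
/- Augmenting along a cycle preserves flow conservation: in a finite directed graph with transit times, let x be a flow over time and let W : (v₁,θ₁),…,(v_q,θ_q) with (v₁,θ₁) = (v_q,θ_q) be a cycle of node-time pairs whose consecutive pairs are arc- or node-linked. For z* > 0 and γ > 0, define z_e(θ) = z* if e = (v_k, v_{k+1}) ∈ E and θ ∈ [θ_k, θ_k + γ), z_e(θ) = −z* if (v_{k+1}, v_k) ∈ E (a backward traversal) and θ ∈ [θ_{k+1}, θ_{k+1} + γ), and z_e(θ) = 0 otherwise (summing contributions if an arc is used multiple times). Then the flow x + z satisfies the same flow conservation equation (1) with the same supply/demand functions B_v, with storage Y'_v differing from Y_v only on the union over node-linked steps k (v_k = v_{k+1}) of the intervals between θ_k and θ_{k+1} (extended by γ), and the change in storage is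 bounded in absolute value by z*·γ·q. -/
open MeasureTheory

/-- The cumulative inflow `X(θ) = ∫₀^θ x`. -/
noncomputable def cumFlow (x : ℝ → ℝ) (θ : ℝ) : ℝ := ∫ t in (0:ℝ)..θ, x t

/-!
A step of the cycle along an arc `e` pushes a unit pulse of length `γ` into `e` (or withdraws one
from it, for a backward step), whose cumulative flow is a ramp of height `γ`. Because the head of
`e` sees that ramp delayed by `τ e`, the step changes the net cumulative inflow of a node `v` at
time `θ` by `φ (k + 1) - φ k`, where `φ j = [w j = v] · ramp γ (θ - t j)`; a step waiting at a node
changes nothing. As the cycle closes up, the `φ` telescope away, leaving for the change of storage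
`z*` times the sum over the waiting steps at `v` of `φ k - φ (k + 1)`. Each such term lies in
`[-γ, γ]` and vanishes outside `[min θ_k θ_{k+1}, max θ_k θ_{k+1} + γ)`.
-/

open Set

noncomputable def ramp (γ x : ℝ) : ℝ := max 0 (min γ x)

section Ramp

variable {γ x y : ℝ}

theorem ramp_nonneg : 0 ≤ ramp γ x := le_max_left _ _

theorem ramp_le (hγ : 0 ≤ γ) : ramp γ x ≤ γ := max_le hγ (min_le_left _ _)

theorem ramp_of_nonpos (hx : x ≤ 0) : ramp γ x = 0 :=
  max_eq_left ((min_le_right _ _).trans hx)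

theorem ramp_of_le (hγ : 0 ≤ γ) (hx : γ ≤ x) : ramp γ x = γ := by
  rw [ramp, min_eq_left hx, max_eq_right hγ]

theorem abs_ramp_sub_ramp_le (hγ : 0 ≤ γ) : |ramp γ x - ramp γ y| ≤ γ :=
  abs_sub_le_of_nonneg_of_le ramp_nonneg (ramp_le hγ) ramp_nonneg (ramp_le hγ)

theorem ramp_sub_eq_ramp_sub_of_notMem {s s' θ : ℝ} (hγ : 0 ≤ γ)
    (hθ : θ ∉ Ico (min s s') (max s s' + γ)) : ramp γ (θ - s) = ramp γ (θ - s') := by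
  rw [mem_Ico, not_and_or, not_le, not_lt] at hθ
  rcases hθ with hθ | hθ
  · rw [ramp_of_nonpos (by linarith [min_le_left s s']),
      ramp_of_nonpos (by linarith [min_le_right s s'])]
  · rw [ramp_of_le hγ (by linarith [le_max_left s s']),
      ramp_of_le hγ (by linarith [le_max_right s s'])]

end Ramp

theorem cumFlow_indicator_Ico {a γ : ℝ} (ha : 0 ≤ a) (θ : ℝ) :
    cumFlow ((Ico a (a + γ)).indicator 1) θ = ramp γ (θ - a) := by
  have hIoc : cumFlow ((Ico a (a + γ)).indicator 1) θ =
      ∫ s in (0:ℝ)..θ, (Ioc a (a + γ)).indicator 1 s :=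
    intervalIntegral.integral_congr_ae <|
      (indicator_ae_eq_of_ae_eq_set Ico_ae_eq_Ioc).mono fun _ h _ => h
  rw [hIoc]
  rcases le_total 0 θ with hθ | hθ
  · rw [intervalIntegral.integral_of_le hθ, setIntegral_indicator measurableSet_Ioc]
    simp only [Pi.one_apply]
    rw [setIntegral_const, Ioc_inter_Ioc, Real.volume_real_Ioc, smul_eq_mul, mul_one,
      max_eq_right ha, ← min_sub_sub_right, add_sub_cancel_left, max_comm, min_comm, ramp]
  · rw [intervalIntegral.integral_of_ge hθ, setIntegral_indicator measurableSet_Ioc]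
    simp only [Pi.one_apply]
    rw [setIntegral_const, Ioc_inter_Ioc, Real.volume_real_Ioc, smul_eq_mul, mul_one,
      ramp_of_nonpos (by linarith), max_eq_right, neg_zero]
    linarith [min_le_left 0 (a + γ), le_max_right θ a]

theorem intervalIntegrable_indicator_Ico_one (r γ u u' : ℝ) :
    IntervalIntegrable ((Ico r (r + γ)).indicator (1 : ℝ → ℝ)) volume u u' :=
  ((integrableOn_const measure_Ico_lt_top.ne).integrable_indicator
    measurableSet_Ico).intervalIntegrable

theorem cumFlow_const_mul_sum {ι : Type*} (K : Finset ι) (c : ℝ) {f : ι → ℝ → ℝ} {θ : ℝ}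
    (hf : ∀ k ∈ K, IntervalIntegrable (f k) volume 0 θ) :
    cumFlow (fun s => c * ∑ k ∈ K, f k s) θ = c * ∑ k ∈ K, cumFlow (f k) θ := by
  rw [cumFlow, intervalIntegral.integral_const_mul, intervalIntegral.integral_finsetSum hf]
  rfl

section Network

variable {V : Type*} [DecidableEq V] (E : Finset (V × V)) (τ : V × V → ℝ)

-- Flow conservation `hY` reads `Y v = B v + netInflow E τ (fun e => cumFlow (x e)) v`.
noncomputable def netInflow (F : V × V → ℝ → ℝ) (v : V) (θ : ℝ) : ℝ :=
  ∑ e ∈ E.filter (fun e => e.2 = v), F e (θ - τ e) - ∑ e ∈ E.filter (fun e => e.1 = v), F e θ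

theorem netInflow_const_mul_sum {ι : Type*} (K : Finset ι) (c : ℝ) (F : ι → V × V → ℝ → ℝ)
    (v : V) (θ : ℝ) :
    netInflow E τ (fun e θ => c * ∑ k ∈ K, F k e θ) v θ = c * ∑ k ∈ K, netInflow E τ (F k) v θ := by
  simp only [netInflow, ← Finset.mul_sum, Finset.sum_sub_distrib, mul_sub]
  rw [Finset.sum_comm, Finset.sum_comm (s := E.filter _)]

theorem netInflow_ite_eq {e₀ : V × V} (he₀ : e₀ ∈ E) (f : ℝ → ℝ) (v : V) (θ : ℝ) :
    netInflow E τ (fun e θ => if e = e₀ then f θ else 0) v θ =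
      (if e₀.2 = v then f (θ - τ e₀) else 0) - (if e₀.1 = v then f θ else 0) := by
  simp [netInflow, Finset.sum_ite_eq', Finset.mem_filter, he₀]

end Network

section CycleStep

variable {V : Type*} [DecidableEq V] {E : Finset (V × V)} {τ : V × V → ℝ} {γ : ℝ}
  {a b : V} {s s' : ℝ}

/-- The `k`-th summand of `z` in the theorem, for the step `(a, s) → (b, s')` of the cycle. -/
noncomputable def stepRate (E : Finset (V × V)) (τ : V × V → ℝ) (γ : ℝ) (a b : V) (s s' : ℝ)
    (e : V × V) (θ : ℝ) : ℝ :=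
  (if (a, b) = e ∧ e ∈ E ∧ s' = s + τ e ∧ θ ∈ Ico s (s + γ) then 1 else 0) -
  (if (b, a) = e ∧ e ∈ E ∧ s' = s - τ e ∧ θ ∈ Ico s' (s' + γ) then 1 else 0)

def IsLinked (E : Finset (V × V)) (τ : V × V → ℝ) (a b : V) (s s' : ℝ) : Prop :=
  ((a, b) ∈ E ∧ s' = s + τ (a, b)) ∨ ((b, a) ∈ E ∧ s' = s - τ (b, a)) ∨ a = b

theorem stepRate_of_forward (hE : ∀ v w : V, (v, w) ∈ E → (w, v) ∉ E) (hab : (a, b) ∈ E)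
    (hs : s' = s + τ (a, b)) (e : V × V) :
    stepRate E τ γ a b s s' e = if e = (a, b) then (Ico s (s + γ)).indicator 1 else 0 := by
  funext θ
  have hba : (b, a) ∉ E := hE a b hab
  split_ifs with he
  · have hne : (b, a) ≠ (a, b) := fun h => hba (h ▸ hab)
    subst he
    simp [stepRate, hab, hs, hne, indicator_apply]
  · rcases eq_or_ne e (b, a) with rfl | he'
    · simp [stepRate, hba]
    · simp [stepRate, Ne.symm he, Ne.symm he']

theorem stepRate_of_backward (hE : ∀ v w : V, (v, w) ∈ E → (w, v) ∉ E) (hba : (b, a) ∈ E)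
    (hs : s' = s - τ (b, a)) (e : V × V) :
    stepRate E τ γ a b s s' e = if e = (b, a) then -(Ico s' (s' + γ)).indicator 1 else 0 := by
  funext θ
  have hab : (a, b) ∉ E := hE b a hba
  split_ifs with he
  · have hne : (a, b) ≠ (b, a) := fun h => hab (h ▸ hba)
    subst he
    simp [stepRate, hba, hs, hne, indicator_apply]
  · rcases eq_or_ne e (a, b) with rfl | he'
    · simp [stepRate, hab]
    · simp [stepRate, Ne.symm he, Ne.symm he']

theorem stepRate_of_eq (haa : (a, a) ∉ E) (e : V × V) :
    stepRate E τ γ a a s s' e = 0 := by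
  funext θ
  by_cases he : e = (a, a)
  · simp [stepRate, he, haa]
  · simp [stepRate, Ne.symm he]


theorem intervalIntegrable_stepRate (hE : ∀ v w : V, (v, w) ∈ E → (w, v) ∉ E)
    (hlink : IsLinked E τ a b s s') (e : V × V) (u u' : ℝ) :
    IntervalIntegrable (stepRate E τ γ a b s s' e) volume u u' := by
  rcases hlink with ⟨hab, hs⟩ | ⟨hba, hs⟩ | rfl
  · rw [stepRate_of_forward hE hab hs]
    split_ifs
    exacts [intervalIntegrable_indicator_Ico_one _ _ _ _, intervalIntegrable_const]
  · rw [stepRate_of_backward hE hba hs]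
    split_ifs
    exacts [(intervalIntegrable_indicator_Ico_one _ _ _ _).neg, intervalIntegrable_const]
  · rw [stepRate_of_eq fun h => hE a a h h]
    exact intervalIntegrable_const

theorem netInflow_cumFlow_stepRate (hE : ∀ v w : V, (v, w) ∈ E → (w, v) ∉ E)
    (hlink : IsLinked E τ a b s s') (hs : 0 ≤ s) (hs' : 0 ≤ s') (v : V) (θ : ℝ) :
    netInflow E τ (fun e => cumFlow (stepRate E τ γ a b s s' e)) v θ =
      if a = b then 0
      else (if b = v then ramp γ (θ - s') else 0) - (if a = v then ramp γ (θ - s) else 0) := by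
  rcases hlink with ⟨hab, hs's⟩ | ⟨hba, hs's⟩ | rfl
  · have hne : a ≠ b := by rintro rfl; exact hE a a hab hab
    have hF : (fun e => cumFlow (stepRate E τ γ a b s s' e)) =
        fun e θ => if e = (a, b) then ramp γ (θ - s) else 0 := by
      funext e θ
      rw [stepRate_of_forward hE hab hs's]
      split_ifs
      exacts [cumFlow_indicator_Ico hs θ, intervalIntegral.integral_zero]
    rw [hF, netInflow_ite_eq E τ hab, if_neg hne, hs's, sub_sub, add_comm (τ _)]
  · have hne : a ≠ b := by rintro rfl; exact hE a a hba hba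
    have hF : (fun e => cumFlow (stepRate E τ γ a b s s' e)) =
        fun e θ => if e = (b, a) then -ramp γ (θ - s') else 0 := by
      funext e θ
      rw [stepRate_of_backward hE hba hs's]
      split_ifs
      · exact intervalIntegral.integral_neg.trans (congrArg Neg.neg (cumFlow_indicator_Ico hs' θ))
      · exact intervalIntegral.integral_zero
    rw [hF, netInflow_ite_eq E τ hba, if_neg hne, hs's, sub_sub, add_sub_cancel]
    split_ifs <;> ring
  · simp [stepRate_of_eq (fun h => hE a a h h), cumFlow, netInflow]

end CycleStep

theorem Fin.sum_succ_sub_castSucc {M : Type*} [AddCommGroup M] {n : ℕ} (f : Fin (n + 1) → M) :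
    ∑ i : Fin n, (f i.succ - f i.castSucc) = f (Fin.last n) - f 0 := by
  rw [Finset.sum_sub_distrib, sub_eq_sub_iff_add_eq_add, add_comm, ← Fin.sum_univ_succ,
    Fin.sum_univ_castSucc, add_comm]

section Cycle

variable {V : Type*} [DecidableEq V] {q : ℕ} (w : Fin (q + 1) → V) (t : Fin (q + 1) → ℝ)
  (γ : ℝ) (v : V) (θ : ℝ)

noncomputable def holdover : ℝ :=
  ∑ k : Fin q, if w k.castSucc = w k.succ ∧ w k.castSucc = v
    then ramp γ (θ - t k.castSucc) - ramp γ (θ - t k.succ) else 0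

variable {w t γ v θ}

theorem holdover_eq_zero (hγ : 0 ≤ γ)
    (hθ : θ ∉ ⋃ k ∈ {k : Fin q | w k.castSucc = w k.succ},
      Ico (min (t k.castSucc) (t k.succ)) (max (t k.castSucc) (t k.succ) + γ)) :
    holdover w t γ v θ = 0 := by
  refine Finset.sum_eq_zero fun k _ => ?_
  split_ifs with hk
  · have hθk : θ ∉ Ico (min (t k.castSucc) (t k.succ)) (max (t k.castSucc) (t k.succ) + γ) :=
      fun h => hθ (mem_biUnion hk.1 h)
    rw [ramp_sub_eq_ramp_sub_of_notMem hγ hθk, sub_self]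
  · rfl

theorem abs_holdover_le (hγ : 0 ≤ γ) : |holdover w t γ v θ| ≤ γ * q := by
  calc |holdover w t γ v θ|
      ≤ ∑ k : Fin q, |if w k.castSucc = w k.succ ∧ w k.castSucc = v
          then ramp γ (θ - t k.castSucc) - ramp γ (θ - t k.succ) else 0| :=
        Finset.abs_sum_le_sum_abs _ _
    _ ≤ ∑ _k : Fin q, γ := Finset.sum_le_sum fun k _ => by
        split_ifs
        exacts [abs_ramp_sub_ramp_le hγ, by rwa [abs_zero]]
    _ = γ * q := by simp [mul_comm]

end Cycle

theorem sum_netInflow_cumFlow_stepRate {V : Type*} [DecidableEq V] {E : Finset (V × V)}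
    {τ : V × V → ℝ} {γ : ℝ} {q : ℕ} {w : Fin (q + 1) → V} {t : Fin (q + 1) → ℝ}
    (hE : ∀ v w : V, (v, w) ∈ E → (w, v) ∉ E) (ht : ∀ k, 0 ≤ t k)
    (hcycle : w (Fin.last q) = w 0 ∧ t (Fin.last q) = t 0)
    (hlink : ∀ k : Fin q, IsLinked E τ (w k.castSucc) (w k.succ) (t k.castSucc) (t k.succ))
    (v : V) (θ : ℝ) :
    ∑ k : Fin q, netInflow E τ (fun e => cumFlow
        (stepRate E τ γ (w k.castSucc) (w k.succ) (t k.castSucc) (t k.succ) e)) v θ =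
      holdover w t γ v θ := by
  set φ : Fin (q + 1) → ℝ := fun j => if w j = v then ramp γ (θ - t j) else 0
  have hstep : ∀ k : Fin q,
      netInflow E τ (fun e => cumFlow
        (stepRate E τ γ (w k.castSucc) (w k.succ) (t k.castSucc) (t k.succ) e)) v θ =
      (φ k.succ - φ k.castSucc) + if w k.castSucc = w k.succ ∧ w k.castSucc = v
        then ramp γ (θ - t k.castSucc) - ramp γ (θ - t k.succ) else 0 := by
    intro k
    rw [netInflow_cumFlow_stepRate hE (hlink k) (ht _) (ht _)]
    by_cases hk : w k.castSucc = w k.succ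
    · simp only [φ, hk, true_and, if_true]
      split_ifs <;> ring
    · simp only [φ, hk, false_and, if_false, add_zero]
  rw [Finset.sum_congr rfl fun k _ => hstep k, Finset.sum_add_distrib, Fin.sum_succ_sub_castSucc]
  simp [φ, hcycle, holdover]

theorem augment_along_cycle_general
    {V : Type*} [DecidableEq V]
    (E : Finset (V × V))
    (hE : ∀ v w : V, (v, w) ∈ E → (w, v) ∉ E)
    (τ : V × V → ℝ)
    (x : V × V → ℝ → ℝ) (B : V → ℝ → ℝ)
    (hxint : ∀ e, ∀ a b : ℝ, IntervalIntegrable (x e) volume a b)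
    (q : ℕ)
    (w : Fin (q + 1) → V) (t : Fin (q + 1) → ℝ)
    (htnn : ∀ k, 0 ≤ t k)
    (hcycle : w (Fin.last q) = w 0 ∧ t (Fin.last q) = t 0)
    (hlink : ∀ k : Fin q,
      ((w k.castSucc, w k.succ) ∈ E ∧
        t k.succ = t k.castSucc + τ (w k.castSucc, w k.succ)) ∨
      ((w k.succ, w k.castSucc) ∈ E ∧
        t k.succ = t k.castSucc - τ (w k.succ, w k.castSucc)) ∨
      (w k.castSucc = w k.succ))
    (zstar γ : ℝ) (hz : 0 < zstar) (hγ : 0 < γ)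
    (z : V × V → ℝ → ℝ)
    (hzdef : ∀ e θ, z e θ =
      zstar * ∑ k : Fin q,
        ((if (w k.castSucc, w k.succ) = e ∧ e ∈ E ∧
              t k.succ = t k.castSucc + τ e ∧
              θ ∈ Set.Ico (t k.castSucc) (t k.castSucc + γ)
          then (1:ℝ) else 0) -
         (if (w k.succ, w k.castSucc) = e ∧ e ∈ E ∧
              t k.succ = t k.castSucc - τ e ∧
              θ ∈ Set.Ico (t k.succ) (t k.succ + γ)
          then (1:ℝ) else 0)))
    (Y Y' : V → ℝ → ℝ)
    (hY : ∀ v θ, Y v θ = B v θ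
        - ∑ e ∈ E.filter (fun e => e.1 = v), cumFlow (x e) θ
        + ∑ e ∈ E.filter (fun e => e.2 = v), cumFlow (x e) (θ - τ e))
    (hY' : ∀ v θ, Y' v θ = B v θ
        - ∑ e ∈ E.filter (fun e => e.1 = v), cumFlow (fun s => x e s + z e s) θ
        + ∑ e ∈ E.filter (fun e => e.2 = v), cumFlow (fun s => x e s + z e s) (θ - τ e)) :
    (∀ v : V, ∀ θ : ℝ,
      θ ∉ (⋃ k ∈ {k : Fin q | w k.castSucc = w k.succ},
        Set.Ico (min (t k.castSucc) (t k.succ)) (max (t k.castSucc) (t k.succ) + γ)) →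
      Y' v θ = Y v θ) ∧
    (∀ v : V, ∀ θ : ℝ, |Y' v θ - Y v θ| ≤ zstar * γ * q) := by
  set r : Fin q → V × V → ℝ → ℝ := fun k =>
    stepRate E τ γ (w k.castSucc) (w k.succ) (t k.castSucc) (t k.succ)
  have hr : ∀ k e θ, IntervalIntegrable (r k e) volume 0 θ :=
    fun k e => intervalIntegrable_stepRate hE (hlink k) e 0
  have hz_eq : ∀ e, z e = fun θ => zstar * ∑ k, r k e θ := fun e => funext (hzdef e)
  have hz_int : ∀ e θ, IntervalIntegrable (z e) volume 0 θ := fun e θ => by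
    rw [hz_eq]
    simpa only [← Finset.sum_apply] using
      (IntervalIntegrable.sum _ fun k _ => hr k e θ).const_mul zstar
  have hadd : ∀ e θ, cumFlow (fun s => x e s + z e s) θ = cumFlow (x e) θ + cumFlow (z e) θ :=
    fun e θ => intervalIntegral.integral_add (hxint e 0 θ) (hz_int e θ)
  have hdiff : ∀ v θ, Y' v θ - Y v θ = zstar * holdover w t γ v θ := by
    intro v θ
    have hZ : (fun e => cumFlow (z e)) = fun e θ => zstar * ∑ k, cumFlow (r k e) θ := by
      funext e θ
      rw [hz_eq]
      exact cumFlow_const_mul_sum _ _ fun k _ => hr k e θ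
    rw [← sum_netInflow_cumFlow_stepRate hE htnn hcycle hlink, ← netInflow_const_mul_sum, ← hZ,
      hY', hY]
    simp only [netInflow, hadd, Finset.sum_add_distrib]
    ring
  refine ⟨fun v θ hθ => ?_, fun v θ => ?_⟩
  · rw [← sub_eq_zero, hdiff, holdover_eq_zero hγ.le hθ, mul_zero]
  · rw [hdiff, abs_mul, abs_of_pos hz, mul_assoc]
    exact mul_le_mul_of_nonneg_left (abs_holdover_le hγ.le) hz.le

/-- Augmenting a flow `x` by a constant rate `z*` for `γ` time units
along a cycle `W` of node-time pairs (with arc-, backward-arc- or node-links)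
preserves flow conservation with the same supply/demand functions `B_v`: the new
storage `Y'` differs from `Y` only on the union, over node-linked steps, of the
intervals between `θ_k` and `θ_{k+1}` extended by `γ`, and the change in storage is
bounded in absolute value by `z* · γ · q`. -/
theorem augment_along_cycle
    {V : Type*} [Fintype V] [DecidableEq V]
    (E : Finset (V × V))
    (hE : ∀ v w : V, (v, w) ∈ E → (w, v) ∉ E)
    (hEloop : ∀ v : V, (v, v) ∉ E)
    (τ : V × V → ℝ)
    (x : V × V → ℝ → ℝ) (B : V → ℝ → ℝ)
    (hxint : ∀ e, ∀ a b : ℝ, IntervalIntegrable (x e) volume a b)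
    (q : ℕ) (hq : 0 < q)
    (w : Fin (q + 1) → V) (t : Fin (q + 1) → ℝ)
    (htnn : ∀ k, 0 ≤ t k)
    (hcycle : w (Fin.last q) = w 0 ∧ t (Fin.last q) = t 0)
    (hlink : ∀ k : Fin q,
      ((w k.castSucc, w k.succ) ∈ E ∧
        t k.succ = t k.castSucc + τ (w k.castSucc, w k.succ)) ∨
      ((w k.succ, w k.castSucc) ∈ E ∧
        t k.succ = t k.castSucc - τ (w k.succ, w k.castSucc)) ∨
      (w k.castSucc = w k.succ))
    (zstar γ : ℝ) (hz : 0 < zstar) (hγ : 0 < γ)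
    (z : V × V → ℝ → ℝ)
    (hzdef : ∀ e θ, z e θ =
      zstar * ∑ k : Fin q,
        ((if (w k.castSucc, w k.succ) = e ∧ e ∈ E ∧
              t k.succ = t k.castSucc + τ e ∧
              θ ∈ Set.Ico (t k.castSucc) (t k.castSucc + γ)
          then (1:ℝ) else 0) -
         (if (w k.succ, w k.castSucc) = e ∧ e ∈ E ∧
              t k.succ = t k.castSucc - τ e ∧
              θ ∈ Set.Ico (t k.succ) (t k.succ + γ)
          then (1:ℝ) else 0)))
    (Y Y' : V → ℝ → ℝ)
    (hY : ∀ v θ, Y v θ = B v θ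
        - ∑ e ∈ E.filter (fun e => e.1 = v), cumFlow (x e) θ
        + ∑ e ∈ E.filter (fun e => e.2 = v), cumFlow (x e) (θ - τ e))
    (hY' : ∀ v θ, Y' v θ = B v θ
        - ∑ e ∈ E.filter (fun e => e.1 = v), cumFlow (fun s => x e s + z e s) θ
        + ∑ e ∈ E.filter (fun e => e.2 = v), cumFlow (fun s => x e s + z e s) (θ - τ e)) :
    (∀ v : V, ∀ θ : ℝ,
      θ ∉ (⋃ k ∈ {k : Fin q | w k.castSucc = w k.succ},
        Set.Ico (min (t k.castSucc) (t k.succ)) (max (t k.castSucc) (t k.succ) + γ)) →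
      Y' v θ = Y v θ) ∧
    (∀ v : V, ∀ θ : ℝ, |Y' v θ - Y v θ| ≤ zstar * γ * q) :=
  augment_along_cycle_general E hE τ x B hxint q w t htnn hcycle hlink zstar γ hz hγ z hzdef Y Y' hY
    hY'
end
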